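/- Let Q = (q_1,…,q_n) and C = (c_1,…,c_n) be sequences in ℝ^D, let W ≥ 0 be an integer, and suppose that for each j ∈ {1,…,n} we are given finitely many finite nonempty sets S_{j,1},…,S_{j,K_j} ⊆ ℝ^D whose union contains { q_i : 1 ≤ i ≤ n, |i − j| ≤ W }. Then Σ_{j=1}^n ( min_{1 ≤ k ≤ K_j} bd(c_j, S_{j,k}) )² ≤ DTW²_W(Q,C). -/

import Mathlib

/-!
A warping path visits every column `j`, and the query index `i` it pairs with `j` there lies in
the window of `j`, so `q i` belongs to some cluster `S j k`. The distance from `c j` to the bounding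
box of that cluster is at most `‖q i - c j‖`, hence so is the minimum over the clusters. Charging
column `j` to one such cell of the path, distinct columns are charged to distinct cells, and the
squared costs of the remaining cells are nonnegative.
-/

/-- A window-`W` warping path for two series of length `n`. -/
def IsWarpPath (n W K : ℕ) (p : ℕ → ℕ × ℕ) : Prop :=
  1 ≤ K ∧ p 1 = (1, 1) ∧ p K = (n, n) ∧
  (∀ k, 1 ≤ k → k < K →
    p (k + 1) = ((p k).1 + 1, (p k).2) ∨
    p (k + 1) = ((p k).1, (p k).2 + 1) ∨
    p (k + 1) = ((p k).1 + 1, (p k).2 + 1)) ∧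
  (∀ k, 1 ≤ k → k ≤ K → |((p k).1 : ℤ) - ((p k).2 : ℤ)| ≤ (W : ℤ))

/-- The box distance `bd(c, S)`: the Euclidean distance from the point `c` to the
axis-aligned bounding box of the set `S ⊆ ℝ^D`. -/
noncomputable def boxDist {D : ℕ} (c : EuclideanSpace ℝ (Fin D))
    (S : Set (EuclideanSpace ℝ (Fin D))) : ℝ :=
  Real.sqrt (∑ p : Fin D,
    max (c p - sSup ((fun s => s p) '' S)) (max (sInf ((fun s => s p) '' S) - c p) 0) ^ 2)

lemma max_sub_max_le_abs_sub {a c l u : ℝ} (hl : l ≤ a) (hu : a ≤ u) :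
    max (c - u) (max (l - c) 0) ≤ |a - c| :=
  max_le (by linarith [neg_abs_le (a - c)])
    (max_le (by linarith [le_abs_self (a - c)]) (abs_nonneg _))

lemma boxDist_le_norm_sub {D : ℕ} {S : Set (EuclideanSpace ℝ (Fin D))} (hS : S.Finite)
    {x : EuclideanSpace ℝ (Fin D)} (hx : x ∈ S) (c : EuclideanSpace ℝ (Fin D)) :
    boxDist c S ≤ ‖x - c‖ := by
  rw [boxDist, EuclideanSpace.norm_eq]
  refine Real.sqrt_le_sqrt (Finset.sum_le_sum fun p _ => ?_)
  have hmem : x p ∈ (fun s => s p) '' S := ⟨x, hx, rfl⟩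
  rw [PiLp.sub_apply, Real.norm_eq_abs]
  exact pow_le_pow_left₀ (le_max_of_le_right (le_max_right _ _))
    (max_sub_max_le_abs_sub (csInf_le (hS.image _).bddBelow hmem)
      (le_csSup (hS.image _).bddAbove hmem)) 2

lemma sInf_boxDist_le_norm_sub {D : ℕ} {S : ℕ → Set (EuclideanSpace ℝ (Fin D))} {m k : ℕ}
    (hk : 1 ≤ k ∧ k ≤ m) (hS : (S k).Finite) {x : EuclideanSpace ℝ (Fin D)} (hx : x ∈ S k)
    (c : EuclideanSpace ℝ (Fin D)) :
    sInf {y : ℝ | ∃ k, 1 ≤ k ∧ k ≤ m ∧ y = boxDist c (S k)} ≤ ‖x - c‖ := by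
  refine le_trans (csInf_le ⟨0, ?_⟩ ⟨k, hk.1, hk.2, rfl⟩) (boxDist_le_norm_sub hS hx c)
  rintro _ ⟨_, _, _, rfl⟩
  exact Real.sqrt_nonneg _

lemma Nat.exists_eq_of_le_add_one {f : ℕ → ℕ} {a b : ℕ} (hab : a ≤ b)
    (hf : ∀ m, a ≤ m → m < b → f (m + 1) ≤ f m + 1) {j : ℕ} (haj : f a ≤ j) (hjb : j ≤ f b) :
    ∃ m, a ≤ m ∧ m ≤ b ∧ f m = j := by
  induction b, hab using Nat.le_induction generalizing j with
  | base => exact ⟨a, le_rfl, le_rfl, by omega⟩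
  | succ b hab ih =>
    by_cases hj : j ≤ f b
    · obtain ⟨m, ham, hmb, hm⟩ := ih (fun m h1 h2 => hf m h1 (by omega)) haj hj
      exact ⟨m, ham, by omega, hm⟩
    · exact ⟨b + 1, by omega, le_rfl, by have := hf b hab (by omega); omega⟩

namespace IsWarpPath

variable {n W K : ℕ} {p : ℕ → ℕ × ℕ}

lemma fst_le_succ (h : IsWarpPath n W K p) {k : ℕ} (h1 : 1 ≤ k) (h2 : k < K) :
    (p k).1 ≤ (p (k + 1)).1 := by
  rcases h.2.2.2.1 k h1 h2 with hs | hs | hs <;> simp [hs]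

lemma snd_succ_le (h : IsWarpPath n W K p) {k : ℕ} (h1 : 1 ≤ k) (h2 : k < K) :
    (p (k + 1)).2 ≤ (p k).2 + 1 := by
  rcases h.2.2.2.1 k h1 h2 with hs | hs | hs <;> simp [hs]

lemma fst_le_fst (h : IsWarpPath n W K p) {k k' : ℕ} (h1 : 1 ≤ k) (hkk' : k ≤ k') (h2 : k' ≤ K) :
    (p k).1 ≤ (p k').1 := by
  induction k', hkk' using Nat.le_induction with
  | base => exact le_rfl
  | succ m hm ih => exact (ih (by omega)).trans (h.fst_le_succ (h1.trans hm) (by omega))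

lemma fst_mem_Icc (h : IsWarpPath n W K p) {k : ℕ} (h1 : 1 ≤ k) (h2 : k ≤ K) :
    (p k).1 ∈ Finset.Icc 1 n := by
  have hlo := h.fst_le_fst le_rfl h1 h2
  have hhi := h.fst_le_fst h1 h2 le_rfl
  rw [h.2.1] at hlo
  rw [h.2.2.1] at hhi
  exact Finset.mem_Icc.2 ⟨hlo, hhi⟩

lemma exists_snd_eq (h : IsWarpPath n W K p) {j : ℕ} (hj : j ∈ Finset.Icc 1 n) :
    ∃ k ∈ Finset.Icc 1 K, (p k).2 = j := by
  obtain ⟨hj1, hjn⟩ := Finset.mem_Icc.1 hj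
  obtain ⟨k, hk1, hkK, hk⟩ := Nat.exists_eq_of_le_add_one (f := fun k => (p k).2) (j := j)
    h.1 (fun m h1 h2 => h.snd_succ_le h1 h2) (by simpa [h.2.1]) (by simpa [h.2.2.1])
  exact ⟨k, Finset.mem_Icc.2 ⟨hk1, hkK⟩, hk⟩

end IsWarpPath

lemma Finset.sum_le_sum_of_forall_exists_fiber {ι κ M : Type*} [AddCommMonoid M] [PartialOrder M]
    [IsOrderedAddMonoid M] {s : Finset ι} {t : Finset κ} {σ : κ → ι} {f : ι → M} {g : κ → M}
    (hg : ∀ k ∈ t, 0 ≤ g k) (h : ∀ i ∈ s, ∃ k ∈ t, σ k = i ∧ f i ≤ g k) :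
    ∑ i ∈ s, f i ≤ ∑ k ∈ t, g k := by
  classical
  calc ∑ i ∈ s, f i
      ≤ ∑ i ∈ s, ∑ k ∈ t with σ k = i, g k := by
        refine Finset.sum_le_sum fun i hi => ?_
        obtain ⟨k, hk, hki, hfg⟩ := h i hi
        exact hfg.trans (Finset.single_le_sum (fun k hk => hg k (Finset.mem_filter.1 hk).1)
          (Finset.mem_filter.2 ⟨hk, hki⟩))
    _ ≤ ∑ k ∈ t, g k :=
        Finset.sum_fiberwise_le_sum_of_sum_fiber_nonneg fun _ _ =>
          Finset.sum_nonneg fun k hk => hg k (Finset.mem_filter.1 hk).1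

theorem lbpc_le_dtw_general {D : ℕ} (n W : ℕ)
    (q c : ℕ → EuclideanSpace ℝ (Fin D))
    (Kc : ℕ → ℕ)
    (S : ℕ → ℕ → Set (EuclideanSpace ℝ (Fin D)))
    (hfin : ∀ j k, 1 ≤ j → j ≤ n → 1 ≤ k → k ≤ Kc j → (S j k).Finite)
    (hcover : ∀ j, 1 ≤ j → j ≤ n →
      {x | ∃ i, 1 ≤ i ∧ i ≤ n ∧ |(i : ℤ) - (j : ℤ)| ≤ (W : ℤ) ∧ x = q i} ⊆
        ⋃ k ∈ Finset.Icc 1 (Kc j), S j k)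
    (K : ℕ) (π : ℕ → ℕ × ℕ) (hπ : IsWarpPath n W K π) :
    ∑ j ∈ Finset.Icc 1 n,
        (sInf {x : ℝ | ∃ k, 1 ≤ k ∧ k ≤ Kc j ∧ x = boxDist (c j) (S j k)}) ^ 2 ≤
      ∑ k ∈ Finset.Icc 1 K, ‖q (π k).1 - c (π k).2‖ ^ 2 := by
  refine Finset.sum_le_sum_of_forall_exists_fiber (σ := fun k => (π k).2) (fun k _ => sq_nonneg _)
    fun j hj => ?_
  obtain ⟨k, hk, rfl⟩ := hπ.exists_snd_eq hj
  obtain ⟨hk1, hkK⟩ := Finset.mem_Icc.1 hk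
  obtain ⟨hj1, hjn⟩ := Finset.mem_Icc.1 hj
  obtain ⟨hi1, hin⟩ := Finset.mem_Icc.1 (hπ.fst_mem_Icc hk1 hkK)
  have hqi := hcover _ hj1 hjn ⟨_, hi1, hin, hπ.2.2.2.2 k hk1 hkK, rfl⟩
  simp only [Set.mem_iUnion, Finset.mem_Icc] at hqi
  obtain ⟨k', hk', hqk'⟩ := hqi
  refine ⟨k, hk, rfl, pow_le_pow_left₀ (Real.sInf_nonneg ?_) ?_ 2⟩
  · rintro _ ⟨_, _, _, rfl⟩
    exact Real.sqrt_nonneg _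
  · exact sInf_boxDist_le_norm_sub hk' (hfin _ _ hj1 hjn hk'.1 hk'.2) hqk' _

/-- Soundness of the LB_PC (point clustering) lower bound: if, for each candidate index
`j`, the finite nonempty sets `S j 1, …, S j (Kc j)` cover the query points in the window
of `c j`, then the sum over `j` of the squared minimum box distance over the clusters is
at most the squared cost of every window-`W` warping path, hence at most `DTW²_W(Q,C)`. -/
theorem lbpc_le_dtw {D : ℕ} (n W : ℕ) (hn : 1 ≤ n)
    (q c : ℕ → EuclideanSpace ℝ (Fin D))
    (Kc : ℕ → ℕ) (hKc : ∀ j, 1 ≤ j → j ≤ n → 1 ≤ Kc j)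
    (S : ℕ → ℕ → Set (EuclideanSpace ℝ (Fin D)))
    (hfin : ∀ j k, 1 ≤ j → j ≤ n → 1 ≤ k → k ≤ Kc j → (S j k).Finite)
    (hne : ∀ j k, 1 ≤ j → j ≤ n → 1 ≤ k → k ≤ Kc j → (S j k).Nonempty)
    (hcover : ∀ j, 1 ≤ j → j ≤ n →
      {x | ∃ i, 1 ≤ i ∧ i ≤ n ∧ |(i : ℤ) - (j : ℤ)| ≤ (W : ℤ) ∧ x = q i} ⊆
        ⋃ k ∈ Finset.Icc 1 (Kc j), S j k)
    (K : ℕ) (π : ℕ → ℕ × ℕ) (hπ : IsWarpPath n W K π) :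
    ∑ j ∈ Finset.Icc 1 n,
        (sInf {x : ℝ | ∃ k, 1 ≤ k ∧ k ≤ Kc j ∧ x = boxDist (c j) (S j k)}) ^ 2 ≤
      ∑ k ∈ Finset.Icc 1 K, ‖q (π k).1 - c (π k).2‖ ^ 2 :=
  lbpc_le_dtw_general n W q c Kc S hfin hcover K π hπ
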